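/- Assume r ≥ q, that L_{−q} is an irreducible L_0-module, that L_{−q+i} = [L_{−q}, L_i] for all 0 ≤ i ≤ q−1, that [L_{−q+i}, L_{−i}] = L_{−q} for all 0 ≤ i ≤ q, and that [L_{−q}, [L_{−q}, L_q]] ≠ 0. Then for every i with 1 ≤ i ≤ q, [L_{−q}, [L_{−i}, L_i]] = L_{−q}; in particular [L_{−i}, L_i] ≠ 0. (Lemma 2.19.) -/
import Mathlib


/- Graded Lie algebra setting: `F` a field of characteristic 3, `A` a
finite-dimensional Lie algebra over `F`, with a `ℤ`-grading `L : ℤ → Submodule F A`. -/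

namespace GradedLie

variable {F A : Type*} [Field F] [CharP F 3] [LieRing A] [LieAlgebra F A]

/-- The linear span of all brackets `⁅u, v⁆` with `u ∈ U`, `v ∈ V`. -/
def bSpan (U V : Submodule F A) : Submodule F A :=
  Submodule.span F {z | ∃ u ∈ U, ∃ v ∈ V, z = ⁅u, v⁆}

/-- `M` is an irreducible `L0`-module under the adjoint action:
`M ≠ 0` and the only `L0`-submodules of `M` are `0` and `M`. -/
def IsIrred (L0 M : Submodule F A) : Prop :=
  M ≠ ⊥ ∧ ∀ V ≤ M, bSpan L0 V ≤ V → V = ⊥ ∨ V = M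

lemma bracket_mem_bSpan {U V : Submodule F A} {u v : A} (hu : u ∈ U) (hv : v ∈ V) :
    ⁅u, v⁆ ∈ bSpan U V :=
  Submodule.subset_span ⟨u, hu, v, hv, rfl⟩

lemma bSpan_le {U V M : Submodule F A} (h : ∀ u ∈ U, ∀ v ∈ V, ⁅u, v⁆ ∈ M) :
    bSpan U V ≤ M := by
  apply Submodule.span_le.2
  rintro z ⟨u, hu, v, hv, rfl⟩
  exact h u hu v hv

lemma bSpan_comm (U V : Submodule F A) : bSpan U V = bSpan V U := by
  have key : ∀ (U V : Submodule F A), bSpan U V ≤ bSpan V U := by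
    intro U V
    apply bSpan_le
    intro u hu v hv
    have h : ⁅u, v⁆ = -⁅v, u⁆ := (lie_skew u v).symm
    rw [h]
    exact neg_mem (bracket_mem_bSpan hv hu)
  exact le_antisymm (key U V) (key V U)

lemma bSpan_mono {U U' V V' : Submodule F A} (hU : U ≤ U') (hV : V ≤ V') :
    bSpan U V ≤ bSpan U' V' :=
  bSpan_le fun u hu v hv => bracket_mem_bSpan (hU hu) (hV hv)

lemma bSpan_bot_right (U : Submodule F A) : bSpan U ⊥ = ⊥ := by
  refine le_bot_iff.mp (bSpan_le fun u _ v hv => ?_)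
  rw [Submodule.mem_bot] at hv
  simp [hv]

lemma lie_mem_of_forall {U V N : Submodule F A} {x : A}
    (h : ∀ u ∈ U, ∀ v ∈ V, ⁅x, ⁅u, v⁆⁆ ∈ N) : ∀ b ∈ bSpan U V, ⁅x, b⁆ ∈ N := by
  intro b hb
  induction hb using Submodule.span_induction with
  | mem z hz => obtain ⟨u, hu, v, hv, rfl⟩ := hz; exact h u hu v hv
  | zero => simpa using N.zero_mem
  | add b c _ _ hb hc => simpa [lie_add] using N.add_mem hb hc
  | smul c b _ hb => simpa [lie_smul] using N.smul_mem c hb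

lemma bSpan_swap {X U V : Submodule F A}
    (h : ∀ x ∈ X, ∀ u ∈ U, ⁅x, u⁆ = 0) :
    bSpan X (bSpan U V) = bSpan U (bSpan X V) := by
  have key : ∀ (X U : Submodule F A), (∀ x ∈ X, ∀ u ∈ U, ⁅x, u⁆ = 0) →
      bSpan X (bSpan U V) ≤ bSpan U (bSpan X V) := by
    intro X U h
    apply bSpan_le
    intro x hx b hb
    refine lie_mem_of_forall (fun u hu v hv => ?_) b hb
    rw [leibniz_lie, h x hx u hu, zero_lie, zero_add]
    exact bracket_mem_bSpan hu (bracket_mem_bSpan hx hv)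
  have h' : ∀ u ∈ U, ∀ x ∈ X, ⁅u, x⁆ = 0 := by
    intro u hu x hx
    simp [← lie_skew u x, h x hx u hu]
  exact le_antisymm (key X U h) (key U X h')

lemma bSpan_stab {Y U V : Submodule F A} (hU : bSpan Y U ≤ U) (hV : bSpan Y V ≤ V) :
    bSpan Y (bSpan U V) ≤ bSpan U V := by
  apply bSpan_le
  intro y hy b hb
  refine lie_mem_of_forall (fun u hu v hv => ?_) b hb
  rw [leibniz_lie]
  exact add_mem (bracket_mem_bSpan (hU (bracket_mem_bSpan hy hu)) hv)
    (bracket_mem_bSpan hu (hV (bracket_mem_bSpan hy hv)))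

/-- Lemma 2.19: if `r ≥ q`, `L (-q)` is irreducible, `L (-q+i) = [L (-q), L i]`
for `0 ≤ i ≤ q-1`, `[L (-q+i), L (-i)] = L (-q)` for `0 ≤ i ≤ q`, and
`[L (-q), [L (-q), L q]] ≠ 0`, then `[L (-q), [L (-i), L i]] = L (-q)` for
`1 ≤ i ≤ q`; in particular `[L (-i), L i] ≠ 0`. -/
theorem lemma_2_19
    [FiniteDimensional F A]
    (L : ℤ → Submodule F A)
    (hdecomp : DirectSum.IsInternal L)
    (hgrade : ∀ i j : ℤ, ∀ x ∈ L i, ∀ y ∈ L j, ⁅x, y⁆ ∈ L (i + j))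
    (q r : ℤ) (hq : 1 ≤ q) (hr : 1 ≤ r)
    (hbound : ∀ i : ℤ, i < -q ∨ r < i → L i = ⊥)
    (hbot : L (-q) ≠ ⊥)
    (hrq : q ≤ r)
    (hirr : IsIrred (L 0) (L (-q)))
    (h28 : ∀ i : ℤ, 0 ≤ i → i ≤ q - 1 → L (-q + i) = bSpan (L (-q)) (L i))
    (h217 : ∀ i : ℤ, 0 ≤ i → i ≤ q → bSpan (L (-q + i)) (L (-i)) = L (-q))
    (hnz : bSpan (L (-q)) (bSpan (L (-q)) (L q)) ≠ ⊥) :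
    ∀ i : ℤ, 1 ≤ i → i ≤ q →
      bSpan (L (-q)) (bSpan (L (-i)) (L i)) = L (-q) ∧ bSpan (L (-i)) (L i) ≠ ⊥ := by
  have hgr : ∀ a b : ℤ, bSpan (L a) (L b) ≤ L (a + b) :=
    fun a b => bSpan_le (fun u hu v hv => hgrade a b u hu v hv)
  have hstab0 : ∀ j : ℤ, bSpan (L 0) (L j) ≤ L j := by
    intro j
    have := hgr 0 j
    rwa [zero_add] at this
  intro i h1 h2
  rcases eq_or_lt_of_le h2 with heq | hlt
  · subst heq
    set B := bSpan (L (-i)) (L i) with hB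
    have hB0 : B ≤ L 0 := by
      have := hgr (-i) i
      rwa [neg_add_cancel] at this
    have hle : bSpan (L (-i)) B ≤ L (-i) := by
      refine le_trans (bSpan_mono le_rfl hB0) ?_
      have := hgr (-i) 0
      rwa [add_zero] at this
    have hstabB : bSpan (L 0) B ≤ B := bSpan_stab (hstab0 (-i)) (hstab0 i)
    have hstab : bSpan (L 0) (bSpan (L (-i)) B) ≤ bSpan (L (-i)) B :=
      bSpan_stab (hstab0 (-i)) hstabB
    rcases hirr.2 _ hle hstab with h | h
    · exact absurd h hnz
    · refine ⟨h, fun hb => hnz ?_⟩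
      rw [hb, bSpan_bot_right]
  · have h2' : i ≤ q - 1 := by omega
    have hzb : L (-q + -i) = ⊥ := hbound _ (Or.inl (by omega))
    have hzero : ∀ x ∈ L (-q), ∀ u ∈ L (-i), ⁅x, u⁆ = 0 := by
      intro x hx u hu
      have := hgrade (-q) (-i) x hx u hu
      rw [hzb, Submodule.mem_bot] at this
      exact this
    have key : bSpan (L (-q)) (bSpan (L (-i)) (L i)) = L (-q) := by
      rw [bSpan_swap hzero, ← h28 i (by omega) h2', bSpan_comm, h217 i (by omega) h2]
    refine ⟨key, fun hb => hbot ?_⟩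
    rw [← key, hb, bSpan_bot_right]

end GradedLie
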